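/- For any graph G and positive integer m, the generalized Mycielski graph M_m(G) is a cover graph (equivalently d_min(M_m(G)) = 0) if and only if G is bipartite. -/

import Mathlib

variable {V : Type*}

/-- An orientation of a simple graph `G`: each edge gets exactly one direction. -/
structure Orient (G : SimpleGraph V) where
  dir : V → V → Prop
  dir_adj : ∀ u v, dir u v → G.Adj u v
  adj_dir : ∀ u v, G.Adj u v → dir u v ∨ dir v u
  asymm : ∀ u v, dir u v → ¬ dir v u

/-- The relation obtained from `dir` by reversing the single arc `u → v`. -/
def reverseArc (dir : V → V → Prop) (u v : V) : V → V → Prop :=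
  fun a b => (dir a b ∧ ¬(a = u ∧ b = v)) ∨ (a = v ∧ b = u)

/-- A relation is acyclic if there is no directed cycle. -/
def IsAcyclicRel (dir : V → V → Prop) : Prop :=
  ∀ u v, dir u v → ¬ Relation.ReflTransGen dir v u

/-- An arc `u → v` is dependent if its reversal creates a directed cycle. -/
def DependentArc (dir : V → V → Prop) (u v : V) : Prop :=
  dir u v ∧ ¬ IsAcyclicRel (reverseArc dir u v)

/-- A cover graph admits an acyclic orientation with no dependent arcs. -/
def IsCoverGraph (G : SimpleGraph V) : Prop :=
  ∃ D : Orient G, IsAcyclicRel D.dir ∧ ∀ u v, ¬ DependentArc D.dir u v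

/-- The number of dependent arcs of an orientation. -/
noncomputable def numDependent {G : SimpleGraph V} (D : Orient G) : ℕ :=
  Set.ncard {p : V × V | DependentArc D.dir p.1 p.2}

/-- `d_min`: minimum number of dependent arcs over all acyclic orientations. -/
noncomputable def dmin (G : SimpleGraph V) : ℕ :=
  sInf {n | ∃ D : Orient G, IsAcyclicRel D.dir ∧ numDependent D = n}

/-- `d_max`: maximum number of dependent arcs over all acyclic orientations. -/
noncomputable def dmax (G : SimpleGraph V) : ℕ :=
  sSup {n | ∃ D : Orient G, IsAcyclicRel D.dir ∧ numDependent D = n}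

/-- `c(G)`: minimum number of edges to delete from `G` to get a cover graph. -/
noncomputable def coverDeletion (G : SimpleGraph V) : ℕ :=
  sInf {n | ∃ F : Set (Sym2 V), F ⊆ G.edgeSet ∧ IsCoverGraph (G.deleteEdges F) ∧ F.ncard = n}

/-- The generalized Mycielski graph `M_m(G)`; `none` is the apex `u`,
`some (i, a)` is the vertex `⟨i, a⟩`. -/
def genMycielski (G : SimpleGraph V) (m : ℕ) : SimpleGraph (Option (Fin (m + 1) × V)) where
  Adj x y :=
    match x, y with
    | some (i, a), some (j, b) =>
        G.Adj a b ∧ ((i = j ∧ (i : ℕ) = 0) ∨ (i : ℕ) + 1 = (j : ℕ) ∨ (j : ℕ) + 1 = (i : ℕ))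
    | some (i, _), none => (i : ℕ) = m
    | none, some (j, _) => (j : ℕ) = m
    | none, none => False
  symm := by
    constructor
    rintro (_ | ⟨i, a⟩) (_ | ⟨j, b⟩) h
    · exact h
    · exact h
    · exact h
    · refine ⟨h.1.symm, ?_⟩
      rcases h.2 with ⟨h1, h2⟩ | h' | h'
      · exact Or.inl ⟨h1.symm, h1 ▸ h2⟩
      · exact Or.inr (Or.inr h')
      · exact Or.inr (Or.inl h')
  loopless := by
    constructor
    rintro (_ | ⟨i, a⟩) h <;> simp_all

/-!
If `G` is bipartite, put `⟨0, a⟩` at height `0` or `2` according to the side of `a`, `⟨i, a⟩` at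
height `i` for `i ≥ 1` and the apex at height `m + 1`, and orient every edge upwards. Every arc
then climbs one level, except the arcs inside level `0`, which climb two; a path around such an
arc `⟨0, a⟩ → ⟨0, b⟩` would pass through some `⟨1, c⟩` with `c` adjacent to both `a` and `b`,
which is impossible in a bipartite graph. So no arc is dependent.

Conversely, in a cover orientation three consecutive arcs of a `4`-cycle never point the same
way (the fourth arc would close a directed cycle or be dependent), so the `±1` signs of the arcs
of any closed walk of length `4` sum to `0` (a degenerate one runs back and forth along two
edges). Take an odd closed walk `c` in `G` and sum this over the squares
`⟨i, c (j+1)⟩ ⟨i+1, c (j+2)⟩ ⟨i+2, c (j+1)⟩ ⟨i+1, c j⟩`, reading the apex as level `m + 1`, and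
`⟨0, c j⟩ ⟨1, c (j+1)⟩ ⟨0, c (j+2)⟩ ⟨0, c (j+1)⟩`: the signed count of the lifts of `c` between
two consecutive levels is the same for all levels, vanishes at the top and is twice the signed
length of `c` inside level `0`. But a sum of an odd number of signs is odd.
-/

open Relation SimpleGraph

lemma Finset.odd_sum_of_odd {ι : Type*} {s : Finset ι} {f : ι → ℤ} (hf : ∀ i ∈ s, Odd (f i))
    (hs : Odd s.card) : Odd (∑ i ∈ s, f i) := by
  have : ∑ i ∈ s, f i = ∑ i ∈ s, (f i - 1) + s.card := by simp [Finset.sum_sub_distrib]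
  rw [this]
  exact (Finset.even_sum _ fun i hi => (hf i hi).sub_odd odd_one).add_odd (by exact_mod_cast hs)

lemma ZMod.sum_comp_add_one {M : Type*} [AddCommMonoid M] {n : ℕ} [NeZero n] (f : ZMod n → M) :
    ∑ j, f (j + 1) = ∑ j, f j :=
  Equiv.sum_comp (Equiv.addRight 1) f

lemma SimpleGraph.Walk.adj_getVert_val_add_one {G : SimpleGraph V} {u : V} (w : G.Walk u u)
    [NeZero w.length] (j : ZMod w.length) : G.Adj (w.getVert j.val) (w.getVert (j + 1).val) := by
  have hj := j.val_lt
  rw [ZMod.val_add, ZMod.val_one_eq_one_mod, Nat.add_mod_mod]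
  rcases Nat.lt_or_eq_of_le (show j.val + 1 ≤ w.length from hj) with hlt | heq
  · rw [Nat.mod_eq_of_lt hlt]
    exact w.adj_getVert_succ hj
  · rw [heq, Nat.mod_self, w.getVert_zero]
    simpa [heq] using w.adj_getVert_succ hj

section Relations

variable {X : Type*} {r : X → X → Prop}

lemma Relation.ReflTransGen.height_le (h : X → ℕ) (hr : ∀ a b, r a b → h a < h b) {a b : X}
    (hab : ReflTransGen r a b) : h a ≤ h b := by
  induction hab with
  | refl => exact le_rfl
  | tail _ hbc ih => exact ih.trans (hr _ _ hbc).le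

lemma IsAcyclicRel.of_height (h : X → ℕ) (hr : ∀ a b, r a b → h a < h b) : IsAcyclicRel r :=
  fun a b hab hba => (hr a b hab).not_ge (hba.height_le h hr)

def deleteArc (r : X → X → Prop) (u v : X) : X → X → Prop :=
  fun a b => r a b ∧ ¬(a = u ∧ b = v)

variable {u v : X}

lemma reflTransGen_reverseArc {x y : X} (hxy : ReflTransGen (reverseArc r u v) x y) :
    ReflTransGen (deleteArc r u v) x y ∨
      (ReflTransGen (deleteArc r u v) x v ∧ ReflTransGen (deleteArc r u v) u y) := by
  induction hxy with
  | refl => exact Or.inl .refl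
  | tail _ hbc ih =>
    rcases hbc with hbc | ⟨rfl, rfl⟩
    · exact ih.imp (·.tail hbc) (And.imp_right (·.tail hbc))
    · exact Or.inr ⟨ih.elim id And.left, .refl⟩

lemma DependentArc.exists_bypass (hr : IsAcyclicRel r) (h : DependentArc r u v) :
    ∃ w, r u w ∧ w ≠ v ∧ ReflTransGen r w v := by
  obtain ⟨huv, hcyc⟩ := h
  have hpath : ReflTransGen (deleteArc r u v) u v := by
    by_contra hno
    refine hcyc fun a b hab hba => ?_
    rcases reflTransGen_reverseArc hba, hab with ⟨hba | ⟨hbv, hua⟩, hab | ⟨rfl, rfl⟩⟩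
    · exact hr a b hab.1 (ReflTransGen.mono (fun _ _ => And.left) _ _ hba)
    · exact hno hba
    · exact hno ((hua.tail hab).trans hbv)
    · exact hno hbv
  rcases hpath.cases_head with rfl | ⟨w, huw, hwv⟩
  · exact (hr u u huv .refl).elim
  · exact ⟨w, huw.1, fun hwv => huw.2 ⟨rfl, hwv⟩, ReflTransGen.mono (fun _ _ => And.left) _ _ hwv⟩

end Relations

theorem isCoverGraph_of_height {X : Type*} {M : SimpleGraph X} (h : X → ℕ)
    (hne : ∀ ⦃x y⦄, M.Adj x y → h x ≠ h y) (hle : ∀ ⦃x y⦄, M.Adj x y → h y ≤ h x + 2)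
    (hmid : ∀ ⦃x w y⦄, M.Adj x w → M.Adj w y → M.Adj x y → h x < h w → h w < h y → False) :
    IsCoverGraph M := by
  let D : Orient M :=
    { dir := fun x y => M.Adj x y ∧ h x < h y
      dir_adj := fun _ _ hxy => hxy.1
      adj_dir := fun x y hxy => (hne hxy).lt_or_gt.imp (⟨hxy, ·⟩) (⟨hxy.symm, ·⟩)
      asymm := fun _ _ hxy hyx => hxy.2.not_gt hyx.2 }
  have hup : ∀ x y, D.dir x y → h x < h y := fun _ _ hxy => hxy.2
  have hacy : IsAcyclicRel D.dir := .of_height h hup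
  refine ⟨D, hacy, fun x y hdep => ?_⟩
  obtain ⟨w, hxw, hwy, hwy'⟩ := hdep.exists_bypass hacy
  rcases hwy'.cases_tail with hyw | ⟨z, hwz, hzy⟩
  · exact hwy hyw.symm
  rcases hwz.cases_tail with hzw | ⟨z', hwz', hz'z⟩
  · rw [hzw] at hzy
    exact hmid hxw.1 hzy.1 hdep.1.1 hxw.2 hzy.2
  · linarith [hwz'.height_le h hup, hle hdep.1.1, hxw.2, hz'z.2, hzy.2]

namespace Orient

variable {X : Type*} {M : SimpleGraph X} (D : Orient M) {x y : X}

def IsCoverOrientation : Prop :=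
  IsAcyclicRel D.dir ∧ ∀ u v, ¬DependentArc D.dir u v

open Classical in
noncomputable def sign (x y : X) : ℤ := if D.dir x y then 1 else -1

lemma sign_eq_one_iff : D.sign x y = 1 ↔ D.dir x y := by
  unfold sign; split_ifs with h <;> simp [h]

lemma sign_eq_neg_one_iff (hxy : M.Adj x y) : D.sign x y = -1 ↔ D.dir y x := by
  unfold sign
  split_ifs with h
  · simp [D.asymm _ _ h]
  · simp [(D.adj_dir _ _ hxy).resolve_left h]

lemma sign_eq_one_or_neg_one : D.sign x y = 1 ∨ D.sign x y = -1 := by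
  unfold sign; split_ifs <;> simp

lemma odd_sign : Odd (D.sign x y) := by
  rcases D.sign_eq_one_or_neg_one (x := x) (y := y) with h | h <;> rw [h] <;> decide

lemma sign_swap (hxy : M.Adj x y) : D.sign y x = -D.sign x y := by
  rcases D.adj_dir x y hxy with h | h
  · rw [(D.sign_eq_neg_one_iff hxy.symm).2 h, D.sign_eq_one_iff.2 h]
  · rw [D.sign_eq_one_iff.2 h, (D.sign_eq_neg_one_iff hxy).2 h, neg_neg]

namespace IsCoverOrientation

variable {D} (hD : D.IsCoverOrientation) {x₀ x₁ x₂ x₃ : X}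
include hD

lemma not_dir_path_three (h₃₀ : M.Adj x₃ x₀) (h₀₂ : x₀ ≠ x₂) (h₁₃ : x₁ ≠ x₃)
    (d₀₁ : D.dir x₀ x₁) (d₁₂ : D.dir x₁ x₂) (d₂₃ : D.dir x₂ x₃) : False := by
  rcases D.adj_dir _ _ h₃₀ with d₃₀ | d₀₃
  · exact hD.1 _ _ d₀₁ (((ReflTransGen.single d₁₂).tail d₂₃).tail d₃₀)
  · refine hD.2 x₀ x₃ ⟨d₀₃, fun hacy => hacy x₃ x₀ (Or.inr ⟨rfl, rfl⟩) ?_⟩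
    have e₀₁ : reverseArc D.dir x₀ x₃ x₀ x₁ := Or.inl ⟨d₀₁, fun h => h₁₃ h.2⟩
    have e₁₂ : reverseArc D.dir x₀ x₃ x₁ x₂ :=
      Or.inl ⟨d₁₂, fun h => (D.dir_adj _ _ d₀₁).ne h.1.symm⟩
    have e₂₃ : reverseArc D.dir x₀ x₃ x₂ x₃ := Or.inl ⟨d₂₃, fun h => h₀₂ h.1.symm⟩
    exact ((ReflTransGen.single e₀₁).tail e₁₂).tail e₂₃

lemma not_sign_eq_sign_eq (h₀₁ : M.Adj x₀ x₁) (h₁₂ : M.Adj x₁ x₂) (h₂₃ : M.Adj x₂ x₃)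
    (h₃₀ : M.Adj x₃ x₀) (h₀₂ : x₀ ≠ x₂) (h₁₃ : x₁ ≠ x₃)
    (e₁ : D.sign x₀ x₁ = D.sign x₁ x₂) (e₂ : D.sign x₁ x₂ = D.sign x₂ x₃) : False := by
  rcases D.sign_eq_one_or_neg_one (x := x₀) (y := x₁) with h | h
  · exact hD.not_dir_path_three h₃₀ h₀₂ h₁₃ (D.sign_eq_one_iff.1 h)
      (D.sign_eq_one_iff.1 (e₁.symm.trans h))
      (D.sign_eq_one_iff.1 (e₂.symm.trans (e₁.symm.trans h)))
  · exact hD.not_dir_path_three h₃₀.symm h₁₃.symm h₀₂.symm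
      ((D.sign_eq_neg_one_iff h₂₃).1 (e₂.symm.trans (e₁.symm.trans h)))
      ((D.sign_eq_neg_one_iff h₁₂).1 (e₁.symm.trans h)) ((D.sign_eq_neg_one_iff h₀₁).1 h)

theorem sign_add_sign_add_sign_add_sign (h₀₁ : M.Adj x₀ x₁) (h₁₂ : M.Adj x₁ x₂)
    (h₂₃ : M.Adj x₂ x₃) (h₃₀ : M.Adj x₃ x₀) :
    D.sign x₀ x₁ + D.sign x₁ x₂ + D.sign x₂ x₃ + D.sign x₃ x₀ = 0 := by
  by_cases h₀₂ : x₀ = x₂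
  · subst h₀₂
    rw [D.sign_swap h₀₁, D.sign_swap h₃₀]
    ring
  by_cases h₁₃ : x₁ = x₃
  · subst h₁₃
    rw [D.sign_swap h₁₂, D.sign_swap h₃₀]
    ring
  have := hD.not_sign_eq_sign_eq h₀₁ h₁₂ h₂₃ h₃₀ h₀₂ h₁₃
  have := hD.not_sign_eq_sign_eq h₁₂ h₂₃ h₃₀ h₀₁ h₁₃ (Ne.symm h₀₂)
  have := hD.not_sign_eq_sign_eq h₂₃ h₃₀ h₀₁ h₁₂ (Ne.symm h₀₂) (Ne.symm h₁₃)
  have := hD.not_sign_eq_sign_eq h₃₀ h₀₁ h₁₂ h₂₃ (Ne.symm h₁₃) h₀₂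
  rcases D.sign_eq_one_or_neg_one (x := x₀) (y := x₁) with h₁ | h₁ <;>
  rcases D.sign_eq_one_or_neg_one (x := x₁) (y := x₂) with h₂ | h₂ <;>
  rcases D.sign_eq_one_or_neg_one (x := x₂) (y := x₃) with h₃ | h₃ <;>
  rcases D.sign_eq_one_or_neg_one (x := x₃) (y := x₀) with h₄ | h₄ <;>
  simp_all

end IsCoverOrientation

end Orient

namespace genMycielski

variable {G : SimpleGraph V} {m : ℕ}

section Adjacency

variable {i j : Fin (m + 1)} {a b : V}

@[simp] lemma adj_some_some : (genMycielski G m).Adj (some (i, a)) (some (j, b)) ↔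
    G.Adj a b ∧ ((i = j ∧ (i : ℕ) = 0) ∨ (i : ℕ) + 1 = j ∨ (j : ℕ) + 1 = i) := Iff.rfl

@[simp] lemma adj_some_none : (genMycielski G m).Adj (some (i, a)) none ↔ (i : ℕ) = m := Iff.rfl

@[simp] lemma adj_none_some : (genMycielski G m).Adj none (some (j, b)) ↔ (j : ℕ) = m := Iff.rfl

@[simp] lemma not_adj_none_none : ¬(genMycielski G m).Adj none none := id

end Adjacency

section Height

def height (f : V → ℕ) (m : ℕ) : Option (Fin (m + 1) × V) → ℕ
  | none => m + 1
  | some (i, a) => if (i : ℕ) = 0 then 2 * f a else i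

@[simp] lemma height_none (f : V → ℕ) : height f m none = m + 1 := rfl

@[simp] lemma height_some (f : V → ℕ) (i : Fin (m + 1)) (a : V) :
    height f m (some (i, a)) = if (i : ℕ) = 0 then 2 * f a else i := rfl

variable (f : V → ℕ) (hf : ∀ a b, G.Adj a b → f a + f b = 1) (hm : 0 < m)
include hf hm

lemma height_ne ⦃x y : Option (Fin (m + 1) × V)⦄ (hxy : (genMycielski G m).Adj x y) :
    height f m x ≠ height f m y := by
  rcases x with _ | ⟨i, a⟩ <;> rcases y with _ | ⟨j, b⟩ <;>
    simp only [adj_some_some, adj_some_none, adj_none_some, not_adj_none_none, height_none,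
      height_some, Fin.ext_iff] at hxy ⊢
  · split_ifs <;> omega
  · split_ifs <;> omega
  · have := hf a b hxy.1
    split_ifs <;> omega

lemma height_le_add_two ⦃x y : Option (Fin (m + 1) × V)⦄ (hxy : (genMycielski G m).Adj x y) :
    height f m y ≤ height f m x + 2 := by
  rcases x with _ | ⟨i, a⟩ <;> rcases y with _ | ⟨j, b⟩ <;>
    simp only [adj_some_some, adj_some_none, adj_none_some, not_adj_none_none, height_none,
      height_some, Fin.ext_iff] at hxy ⊢
  · split_ifs <;> omega
  · split_ifs <;> omega
  · have := hf a b hxy.1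
    split_ifs <;> omega

lemma no_height_between ⦃x w y : Option (Fin (m + 1) × V)⦄ (hxw : (genMycielski G m).Adj x w)
    (hwy : (genMycielski G m).Adj w y) (hxy : (genMycielski G m).Adj x y)
    (h₁ : height f m x < height f m w) (h₂ : height f m w < height f m y) : False := by
  rcases x with _ | ⟨i, a⟩ <;> rcases w with _ | ⟨k, c⟩ <;> rcases y with _ | ⟨j, b⟩ <;>
    simp only [adj_some_some, adj_some_none, adj_none_some, not_adj_none_none, height_none,
      height_some, Fin.ext_iff] at hxy hxw hwy h₁ h₂
  case some.some.some =>
    have := hf a c hxw.1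
    have := hf c b hwy.1
    split_ifs at h₁ h₂ <;> omega
  all_goals split_ifs at h₁ h₂ <;> omega

end Height

theorem isCoverGraph_of_colorable (hm : 0 < m) (hG : G.Colorable 2) :
    IsCoverGraph (genMycielski G m) := by
  obtain ⟨col⟩ := hG
  have hf : ∀ a b, G.Adj a b → (col a : ℕ) + col b = 1 := fun a b hab => by
    have := Fin.val_ne_of_ne (col.valid hab)
    omega
  exact isCoverGraph_of_height _ (height_ne _ hf hm) (height_le_add_two _ hf hm)
    (no_height_between _ hf hm)

/-- Levels above `m` all name the apex, which thus acts as the copy `⟨m + 1, a⟩` of every `a`. -/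
def vertex (m i : ℕ) (a : V) : Option (Fin (m + 1) × V) :=
  if h : i ≤ m then some (⟨i, Nat.lt_succ_of_le h⟩, a) else none

section Crossing

variable {i : ℕ} {a b : V}

lemma vertex_succ_self (a : V) : vertex m (m + 1) a = none := dif_neg (by omega)

lemma adj_vertex_zero (hab : G.Adj a b) : (genMycielski G m).Adj (vertex m 0 a) (vertex m 0 b) := by
  simpa [vertex] using hab

lemma adj_vertex_succ (hi : i ≤ m) (hab : G.Adj a b) :
    (genMycielski G m).Adj (vertex m i a) (vertex m (i + 1) b) := by
  unfold vertex
  split_ifs with h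
  · simpa using hab
  · simp only [adj_some_none]
    omega

variable (D : Orient (genMycielski G m)) {n : ℕ} [NeZero n] (c : ZMod n → V)

noncomputable def liftSign (i : ℕ) (j k : ZMod n) : ℤ :=
  D.sign (vertex m i (c j)) (vertex m (i + 1) (c k))

noncomputable def crossingSum (i : ℕ) : ℤ :=
  ∑ j, (liftSign D c i j (j + 1) - liftSign D c i (j + 1) j)

lemma crossingSum_self : crossingSum D c m = 0 := by
  simp only [crossingSum, liftSign, vertex_succ_self, Finset.sum_sub_distrib]
  rw [ZMod.sum_comp_add_one fun j => D.sign (vertex m m (c j)) none, sub_self]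

variable {D} (hD : D.IsCoverOrientation) {c} (hc : ∀ j, G.Adj (c j) (c (j + 1)))
include hD hc

lemma crossingSum_succ (hi : i + 1 ≤ m) : crossingSum D c (i + 1) = crossingSum D c i := by
  have key : ∀ j, liftSign D c i (j + 1) (j + 1 + 1) + liftSign D c (i + 1) (j + 1 + 1) (j + 1) =
      liftSign D c (i + 1) j (j + 1) + liftSign D c i (j + 1) j := fun j => by
    have h₂₃ := adj_vertex_succ hi (hc j)
    have h₃₀ := adj_vertex_succ (Nat.le_of_succ_le hi) (hc j).symm
    have := hD.sign_add_sign_add_sign_add_sign (adj_vertex_succ (Nat.le_of_succ_le hi) (hc (j + 1)))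
      (adj_vertex_succ hi (hc (j + 1)).symm) h₂₃.symm h₃₀.symm
    rw [D.sign_swap h₂₃, D.sign_swap h₃₀] at this
    simp only [liftSign]
    linarith
  have hsum := Finset.sum_congr rfl fun j (_ : j ∈ Finset.univ) => key j
  simp only [Finset.sum_add_distrib] at hsum
  rw [ZMod.sum_comp_add_one fun j => liftSign D c i j (j + 1),
    ZMod.sum_comp_add_one fun j => liftSign D c (i + 1) (j + 1) j] at hsum
  simp only [crossingSum, Finset.sum_sub_distrib]
  linarith

lemma crossingSum_zero :
    crossingSum D c 0 = 2 * ∑ j, D.sign (vertex m 0 (c j)) (vertex m 0 (c (j + 1))) := by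
  have key : ∀ j, liftSign D c 0 j (j + 1) = liftSign D c 0 (j + 1 + 1) (j + 1) +
      D.sign (vertex m 0 (c (j + 1))) (vertex m 0 (c (j + 1 + 1))) +
      D.sign (vertex m 0 (c j)) (vertex m 0 (c (j + 1))) := fun j => by
    have h₁₂ := adj_vertex_succ m.zero_le (hc (j + 1)).symm
    have h₂₃ := adj_vertex_zero (m := m) (hc (j + 1))
    have h₃₀ := adj_vertex_zero (m := m) (hc j)
    have := hD.sign_add_sign_add_sign_add_sign (adj_vertex_succ m.zero_le (hc j)) h₁₂.symm
      h₂₃.symm h₃₀.symm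
    rw [D.sign_swap h₁₂, D.sign_swap h₂₃, D.sign_swap h₃₀] at this
    simp only [liftSign]
    linarith
  have hsum := Finset.sum_congr rfl fun j (_ : j ∈ Finset.univ) => key j
  simp only [Finset.sum_add_distrib] at hsum
  rw [ZMod.sum_comp_add_one fun j => liftSign D c 0 (j + 1) j,
    ZMod.sum_comp_add_one fun j => D.sign (vertex m 0 (c j)) (vertex m 0 (c (j + 1)))] at hsum
  simp only [crossingSum, Finset.sum_sub_distrib]
  linarith

lemma crossingSum_zero_eq_zero : crossingSum D c 0 = 0 :=
  Nat.decreasingInduction (motive := fun i _ => crossingSum D c i = 0)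
    (fun _ hi ih => (crossingSum_succ hD hc hi).symm.trans ih) (crossingSum_self D c) m.zero_le

end Crossing

theorem colorable_of_isCoverGraph (h : IsCoverGraph (genMycielski G m)) : G.Colorable 2 := by
  obtain ⟨D, hD⟩ := h
  refine two_colorable_iff_forall_loop_even.2 fun u w => Nat.not_odd_iff_even.1 fun hodd => ?_
  have : NeZero w.length := ⟨hodd.pos.ne'⟩
  have hc := w.adj_getVert_val_add_one
  have hzero := (crossingSum_zero hD hc).symm.trans (crossingSum_zero_eq_zero hD hc)
  have hsum : Odd (∑ j : ZMod w.length,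
      D.sign (vertex m 0 (w.getVert j.val)) (vertex m 0 (w.getVert (j + 1).val))) :=
    Finset.odd_sum_of_odd (fun _ _ => D.odd_sign) (by rwa [Finset.card_univ, ZMod.card])
  obtain ⟨k, hk⟩ := hsum
  omega

end genMycielski

theorem genMycielski_coverGraph_iff_bipartite_general (G : SimpleGraph V)
    (m : ℕ) (hm : 0 < m) :
    IsCoverGraph (genMycielski G m) ↔ G.Colorable 2 :=
  ⟨genMycielski.colorable_of_isCoverGraph, genMycielski.isCoverGraph_of_colorable hm⟩

theorem genMycielski_coverGraph_iff_bipartite [Finite V] (G : SimpleGraph V)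
    (m : ℕ) (hm : 0 < m) :
    IsCoverGraph (genMycielski G m) ↔ G.Colorable 2 :=
  genMycielski_coverGraph_iff_bipartite_general G m hm
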